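/- arXiv:2604.04504 — 2 statements merged into one kernel-verified Lean document; each statement's English description precedes it below -/
import Mathlib

section
/- Let Ω ⊆ ℝ² be a domain and let φ ∈ C²(Ω, ℝ) be subharmonic (Δφ ≥ 0 on Ω). Then for every u ∈ C_c^∞(Ω, ℝ_2): ‖Du − (Dφ)u‖²_φ ≥ ∫_Ω (Δφ) |u|² e^{−φ} dV. -/
open scoped BigOperators
open MeasureTheory

noncomputable section

/-- The real Clifford algebra `ℝ_n`, realized concretely as the space of
coefficient families indexed by subsets `A ⊆ {1,…,n}` (the standard basis `e_A`). -/
abbrev Cl (n : ℕ) : Type := Finset (Fin n) → ℝ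

namespace Cliff

variable {n : ℕ}

/-- The sign occurring in `e_A * e_B = csign A B • e_{A ∆ B}` for the Clifford algebra
with relations `e_j ^ 2 = -1` and `e_j e_k = - e_k e_j` (`j ≠ k`). -/
def csign (A B : Finset (Fin n)) : ℝ :=
  (-1 : ℝ) ^ ((((A ×ˢ B).filter fun p => p.2 < p.1)).card + (A ∩ B).card)

/-- The Clifford product on `ℝ_n`. -/
def cmul (f g : Cl n) : Cl n :=
  fun C => ∑ A : Finset (Fin n), csign A (symmDiff A C) * f A * g (symmDiff A C)

/-- The unit `1` of `ℝ_n`. -/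
def cone : Cl n := fun A => if A = (∅ : Finset (Fin n)) then 1 else 0

/-- The generator `e_j`. -/
def e (j : Fin n) : Cl n := fun A => if A = {j} then 1 else 0

/-- Clifford conjugation: the anti-automorphism with `1̄ = 1` and `ē_j = -e_j`;
on the basis, `conj e_A = (-1)^(|A|(|A|+1)/2) e_A`. -/
def conj (f : Cl n) : Cl n :=
  fun A => (-1 : ℝ) ^ (A.card * (A.card + 1) / 2) * f A

/-- Scalar part `Re f = f_∅`. -/
def re (f : Cl n) : ℝ := f ∅

/-- Squared norm `|f|² = Σ_A f_A²`. -/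
def normSq (f : Cl n) : ℝ := ∑ A : Finset (Fin n), (f A) ^ 2

/-- Embedding of a Euclidean vector as the Clifford vector `x = Σ_j x_j e_j`. -/
def vec (x : Fin n → ℝ) : Cl n := ∑ j : Fin n, x j • e j

/-- Embedding of a real scalar into `ℝ_n`. -/
def scal (a : ℝ) : Cl n := a • cone

/-- The Euclidean norm `|x|` of a point of `ℝⁿ`. -/
def nrm (x : Fin n → ℝ) : ℝ := Real.sqrt (∑ j : Fin n, (x j) ^ 2)

/-- `j`-th partial derivative of a Clifford-valued function. -/
def pd (j : Fin n) (u : (Fin n → ℝ) → Cl n) (x : Fin n → ℝ) : Cl n :=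
  fderiv ℝ u x (Pi.single j 1)

/-- The Dirac operator `Du = Σ_j e_j ∂_j u`. -/
def Dirac (u : (Fin n → ℝ) → Cl n) : (Fin n → ℝ) → Cl n :=
  fun x => ∑ j : Fin n, cmul (e j) (pd j u x)

/-- `j`-th partial derivative of a scalar function. -/
def pds (j : Fin n) (φ : (Fin n → ℝ) → ℝ) (x : Fin n → ℝ) : ℝ :=
  fderiv ℝ φ x (Pi.single j 1)

/-- `Dφ = Σ_j (∂_j φ) e_j` as a Clifford vector. -/
def Dgrad (φ : (Fin n → ℝ) → ℝ) (x : Fin n → ℝ) : Cl n :=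
  vec (fun j => pds j φ x)

/-- Laplacian of a scalar function, `Δφ = Σ_j ∂_j² φ`. -/
def lap (φ : (Fin n → ℝ) → ℝ) (x : Fin n → ℝ) : ℝ :=
  ∑ j : Fin n, pds j (pds j φ) x

/-- Componentwise Laplacian of a Clifford-valued function. -/
def clap (u : (Fin n → ℝ) → Cl n) (x : Fin n → ℝ) : Cl n :=
  ∑ j : Fin n, pd j (pd j u) x

/-- `|∇φ|² = Σ_j (∂_j φ)²`. -/
def gradSq (φ : (Fin n → ℝ) → ℝ) (x : Fin n → ℝ) : ℝ :=
  ∑ j : Fin n, (pds j φ x) ^ 2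

/-- The formal adjoint `δ_φ u = Du - (Dφ)u` of the Dirac operator. -/
def delta (φ : (Fin n → ℝ) → ℝ) (u : (Fin n → ℝ) → Cl n) : (Fin n → ℝ) → Cl n :=
  fun x => Dirac u x - cmul (Dgrad φ x) (u x)

/-- `u ∈ C_c^∞(Ω, ℝ_n)`: a smooth compactly supported function with support in `Ω`. -/
def IsTest (Ω : Set (Fin n → ℝ)) (u : (Fin n → ℝ) → Cl n) : Prop :=
  ContDiff ℝ (⊤ : ℕ∞) u ∧ HasCompactSupport u ∧ tsupport u ⊆ Ω

/-- Squared weighted L² norm `‖u‖²_φ = ∫_Ω |u|² e^{-φ} dV`. -/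
def wnorm (Ω : Set (Fin n → ℝ)) (φ : (Fin n → ℝ) → ℝ) (u : (Fin n → ℝ) → Cl n) : ℝ :=
  ∫ x in Ω, normSq (u x) * Real.exp (-φ x)

/-- Weighted inner product `⟨u, v⟩_φ = ∫_Ω Re(u v̄) e^{-φ} dV`. -/
def wip (Ω : Set (Fin n → ℝ)) (φ : (Fin n → ℝ) → ℝ)
    (u v : (Fin n → ℝ) → Cl n) : ℝ :=
  ∫ x in Ω, re (cmul (u x) (conj (v x))) * Real.exp (-φ x)

/-- Membership in `L²_φ(Ω, ℝ_n)`. -/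
def MemL2 (Ω : Set (Fin n → ℝ)) (φ : (Fin n → ℝ) → ℝ) (u : (Fin n → ℝ) → Cl n) : Prop :=
  AEStronglyMeasurable u (volume.restrict Ω) ∧
    IntegrableOn (fun x => normSq (u x) * Real.exp (-φ x)) Ω

/-- `Du = f` in the sense of distributions on `Ω`:
`⟨f, v⟩_0 = ⟨u, Dv⟩_0` for all test functions `v`. -/
def DistDirac (Ω : Set (Fin n → ℝ)) (u f : (Fin n → ℝ) → Cl n) : Prop :=
  ∀ v : (Fin n → ℝ) → Cl n, IsTest Ω v → wip Ω 0 f v = wip Ω 0 u (Dirac v)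

/-- `Δu = f` in the sense of distributions on `Ω`. -/
def DistLap (Ω : Set (Fin n → ℝ)) (u f : (Fin n → ℝ) → Cl n) : Prop :=
  ∀ v : (Fin n → ℝ) → Cl n, IsTest Ω v → wip Ω 0 f v = wip Ω 0 u (clap v)

/-- A domain: a connected open set. -/
def IsDomain (Ω : Set (Fin n → ℝ)) : Prop := IsOpen Ω ∧ IsConnected Ω

end Cliff

/-!
Pair the coefficients of `u` into the two complex functions `u_{0} - i u_{1}` and
`u_∅ - i u_{0,1}`; then `|δ_φ u|²` is the sum of `|2∂̄f - 2(∂̄φ) f|²` over these two `f`. For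
compactly supported `f` there is a pointwise Bochner–Kodaira identity
`|2∂̄f - 2(∂̄φ) f|² e^{-φ} = Δφ |f|² e^{-φ} + |2∂f|² e^{-φ} + div W`
with a compactly supported `C¹` field `W`. Integrating, the divergence drops out and `|2∂f|² ≥ 0`
is discarded. Since `φ` is only `C²` on `Ω`, it is first replaced by a global `C²` function that
agrees with `φ` near `tsupport u`, which changes neither integrand.
-/

open Filter Topology Set
open scoped Manifold

theorem ContDiffOn.exists_contDiff_eventuallyEq {E : Type*} [NormedAddCommGroup E]
    [NormedSpace ℝ E] [FiniteDimensional ℝ E] {k : ℕ∞} {φ : E → ℝ} {Ω K : Set E}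
    (hφ : ContDiffOn ℝ k φ Ω) (hΩ : IsOpen Ω) (hK : IsClosed K) (hKΩ : K ⊆ Ω) :
    ∃ Φ : E → ℝ, ContDiff ℝ k Φ ∧ Φ =ᶠ[𝓝ˢ K] φ := by
  obtain ⟨ψ, hψ0, hψ1, -⟩ := exists_contMDiffMap_zero_one_nhds_of_isClosed 𝓘(ℝ, E) (n := k)
    hΩ.isClosed_compl hK (disjoint_compl_left_iff_subset.mpr hKΩ)
  have hψ : ContDiff ℝ k ψ := contMDiff_iff_contDiff.mp ψ.contMDiff
  refine ⟨Ω.indicator (fun x => ψ x * φ x), contDiff_iff_contDiffAt.mpr fun x => ?_, ?_⟩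
  · by_cases hx : x ∈ Ω
    · exact (hψ.contDiffAt.mul (hφ.contDiffAt (hΩ.mem_nhds hx))).congr_of_eventuallyEq
        (eventuallyEq_of_mem (hΩ.mem_nhds hx) fun y hy => indicator_of_mem hy _)
    · refine contDiffAt_const (c := (0 : ℝ)) |>.congr_of_eventuallyEq ?_
      filter_upwards [hψ0.filter_mono (nhds_le_nhdsSet hx)] with y hy
      simp [indicator, hy]
  · filter_upwards [hψ1, hΩ.mem_nhdsSet.mpr hKΩ] with y hy hyΩ
    simp [indicator_of_mem hyΩ, hy]

namespace Cliff

section PartialDerivative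

variable {n : ℕ} {f g : (Fin n → ℝ) → ℝ} {x : Fin n → ℝ}

theorem pds_const (c : ℝ) (j : Fin n) : pds j (fun _ => c) x = 0 := by
  simp [pds]

theorem pds_add (hf : DifferentiableAt ℝ f x) (hg : DifferentiableAt ℝ g x) (j : Fin n) :
    pds j (fun y => f y + g y) x = pds j f x + pds j g x := by
  simp [pds, fderiv_fun_add hf hg]

theorem pds_sub (hf : DifferentiableAt ℝ f x) (hg : DifferentiableAt ℝ g x) (j : Fin n) :
    pds j (fun y => f y - g y) x = pds j f x - pds j g x := by
  simp [pds, fderiv_fun_sub hf hg]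

theorem pds_mul (hf : DifferentiableAt ℝ f x) (hg : DifferentiableAt ℝ g x) (j : Fin n) :
    pds j (fun y => f y * g y) x = pds j f x * g x + f x * pds j g x := by
  simp only [pds, fderiv_fun_mul hf hg, add_apply, smul_apply, smul_eq_mul]
  ring

theorem pds_exp_neg (hf : DifferentiableAt ℝ f x) (j : Fin n) :
    pds j (fun y => Real.exp (-f y)) x = -pds j f x * Real.exp (-f x) := by
  have h : HasFDerivAt (fun y => Real.exp (-f y)) (Real.exp (-f x) • -fderiv ℝ f x) x :=
    hf.hasFDerivAt.neg.exp
  simp only [pds, h.fderiv, smul_apply, neg_apply, smul_eq_mul]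
  ring

theorem pds_congr (h : f =ᶠ[𝓝 x] g) (j : Fin n) : pds j f x = pds j g x := by
  rw [pds, pds, h.fderiv_eq]

theorem pds_eq_zero_of_notMem_tsupport (hx : x ∉ tsupport f) (j : Fin n) : pds j f x = 0 := by
  rw [pds, Function.notMem_support.mp fun h => hx (support_fderiv_subset ℝ h)]
  rfl

theorem contDiff_pds {k : ℕ} (hf : ContDiff ℝ (k + 1) f) (j : Fin n) : ContDiff ℝ k (pds j f) :=
  (hf.fderiv_right le_rfl).clm_apply contDiff_const

theorem pds_comm (hf : ContDiff ℝ 2 f) (i j : Fin n) (x : Fin n → ℝ) :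
    pds i (pds j f) x = pds j (pds i f) x := by
  have hd : DifferentiableAt ℝ (fderiv ℝ f) x :=
    (hf.fderiv_right (m := 1) le_rfl).differentiable one_ne_zero x
  have key : ∀ k l : Fin n,
      pds k (pds l f) x = fderiv ℝ (fderiv ℝ f) x (Pi.single k 1) (Pi.single l 1) := by
    intro k l
    change fderiv ℝ (fun y => fderiv ℝ f y (Pi.single l 1)) x (Pi.single k 1) = _
    rw [fderiv_clm_apply hd (differentiableAt_const _)]
    simp
  rw [key, key]
  exact hf.contDiffAt.isSymmSndFDerivAt (by simp) _ _

theorem integral_pds_eq_zero (hf : ContDiff ℝ 1 f) (hcs : HasCompactSupport f) (j : Fin n) :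
    ∫ x, pds j f x = 0 := by
  have hint : Integrable (pds j f) :=
    (contDiff_pds (k := 0) hf j).continuous.integrable_of_hasCompactSupport (hcs.fderiv_apply ℝ _)
  have h := integral_mul_fderiv_eq_neg_fderiv_mul_of_integrable (f := fun _ => (1 : ℝ)) (g := f)
    (v := Pi.single j 1) (by simp) (by simp only [one_mul]; exact hint)
    (by simp only [one_mul]; exact hf.continuous.integrable_of_hasCompactSupport hcs)
    (fun x _ => differentiableAt_const _) (fun x _ => hf.differentiable one_ne_zero x)
  simpa [pds] using h

theorem integral_le_of_eq_add_add_sum_pds {F G S : (Fin n → ℝ) → ℝ}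
    {W : Fin n → (Fin n → ℝ) → ℝ} (hF : Integrable F) (hS : Integrable S) (hS0 : 0 ≤ S)
    (hW : ∀ j, ContDiff ℝ 1 (W j)) (hWc : ∀ j, HasCompactSupport (W j))
    (hG : ∀ x, G x = F x + S x + ∑ j, pds j (W j) x) :
    ∫ x, F x ≤ ∫ x, G x := by
  have hdiv : ∀ j ∈ Finset.univ, Integrable (pds j (W j)) := fun j _ =>
    (contDiff_pds (k := 0) (hW j) j).continuous.integrable_of_hasCompactSupport
      ((hWc j).fderiv_apply ℝ _)
  calc ∫ x, F x ≤ (∫ x, F x) + ∫ x, S x := le_add_of_nonneg_right (integral_nonneg fun x => hS0 x)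
    _ = ∫ x, G x := by
      simp_rw [hG]
      rw [integral_add (f := fun x => F x + S x) (hF.add hS) (integrable_finsetSum _ hdiv),
        integral_add hF hS, integral_finsetSum _ hdiv]
      simp [integral_pds_eq_zero (hW _) (hWc _)]

end PartialDerivative

section Clifford

variable {n : ℕ}

theorem cmul_e_apply (j : Fin n) (g : Cl n) (C : Finset (Fin n)) :
    cmul (e j) g C = csign {j} (symmDiff {j} C) * g (symmDiff {j} C) := by
  rw [cmul, Finset.sum_eq_single {j}]
  · simp [e]
  · intro A _ hA
    simp [e, hA]
  · simp

theorem cmul_zero (f : Cl n) : cmul f 0 = 0 := by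
  ext C
  simp [cmul]

theorem normSq_zero : normSq (0 : Cl n) = 0 := by
  simp [normSq]

theorem delta_eq_sum (φ : (Fin n → ℝ) → ℝ) (u : (Fin n → ℝ) → Cl n) (x : Fin n → ℝ) :
    delta φ u x = ∑ j, cmul (e j) (pd j u x - pds j φ x • u x) := by
  ext C
  simp only [delta, Dirac, Dgrad, vec, cmul, Finset.sum_apply, Pi.sub_apply, Pi.smul_apply,
    smul_eq_mul, mul_sub, Finset.sum_sub_distrib, Finset.sum_mul, Finset.mul_sum]
  congr 1
  rw [Finset.sum_comm]
  exact Finset.sum_congr rfl fun j _ => Finset.sum_congr rfl fun A _ => by ring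

theorem pd_apply {u : (Fin n → ℝ) → Cl n} {x : Fin n → ℝ} (hu : DifferentiableAt ℝ u x)
    (j : Fin n) (A : Finset (Fin n)) : pd j u x A = pds j (fun y => u y A) x := by
  rw [pds, fderiv_apply hu]
  rfl

theorem delta_eq_zero_of_notMem_tsupport {φ : (Fin n → ℝ) → ℝ} {u : (Fin n → ℝ) → Cl n}
    {x : Fin n → ℝ} (hx : x ∉ tsupport u) : delta φ u x = 0 := by
  have hpd : ∀ j, pd j u x = 0 := fun j => by
    rw [pd, Function.notMem_support.mp fun h => hx (support_fderiv_subset ℝ h)]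
    rfl
  simp [delta_eq_sum, hpd, image_eq_zero_of_notMem_tsupport hx, cmul_zero]

theorem lap_mul_normSq_mul_exp_congr {φ ψ : (Fin n → ℝ) → ℝ} {u : (Fin n → ℝ) → Cl n}
    (h : ∀ x ∈ tsupport u, φ =ᶠ[𝓝 x] ψ) (x : Fin n → ℝ) :
    lap φ x * normSq (u x) * Real.exp (-φ x) = lap ψ x * normSq (u x) * Real.exp (-ψ x) := by
  by_cases hx : x ∈ tsupport u
  · have hlap : lap φ x = lap ψ x := Finset.sum_congr rfl fun j _ =>
      pds_congr ((h x hx).eventuallyEq_nhds.mono fun _ hy => pds_congr hy j) j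
    rw [hlap, (h x hx).eq_of_nhds]
  · simp [image_eq_zero_of_notMem_tsupport hx, normSq_zero]

theorem normSq_delta_mul_exp_congr {φ ψ : (Fin n → ℝ) → ℝ} {u : (Fin n → ℝ) → Cl n}
    (h : ∀ x ∈ tsupport u, φ =ᶠ[𝓝 x] ψ) (x : Fin n → ℝ) :
    normSq (delta φ u x) * Real.exp (-φ x) = normSq (delta ψ u x) * Real.exp (-ψ x) := by
  by_cases hx : x ∈ tsupport u
  · simp only [delta, Dgrad, pds_congr (h x hx), (h x hx).eq_of_nhds]
  · simp [delta_eq_zero_of_notMem_tsupport hx, normSq_zero]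

end Clifford

theorem sum_finset_fin_two (g : Finset (Fin 2) → ℝ) :
    ∑ A : Finset (Fin 2), g A = g ∅ + g {0} + g {1} + g {0, 1} := by
  rw [show (Finset.univ : Finset (Finset (Fin 2))) = {∅, {0}, {1}, {0, 1}} by decide,
    Finset.sum_insert (by decide), Finset.sum_insert (by decide), Finset.sum_pair (by decide)]
  ring

theorem normSq_fin_two (v : Cl 2) : normSq v = v ∅ ^ 2 + v {0} ^ 2 + v {1} ^ 2 + v {0, 1} ^ 2 :=
  sum_finset_fin_two _

theorem normSq_cmul_e_add_cmul_e (p q : Cl 2) :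
    normSq (cmul (e 0) p + cmul (e 1) q) =
      (p {0} + q {1}) ^ 2 + (p ∅ + q {0, 1}) ^ 2 + (p {0, 1} - q ∅) ^ 2 + (p {1} - q {0}) ^ 2 := by
  have h00 : symmDiff ({0} : Finset (Fin 2)) ∅ = {0} := by decide
  have h01 : symmDiff ({0} : Finset (Fin 2)) {0} = ∅ := by decide
  have h02 : symmDiff ({0} : Finset (Fin 2)) {1} = {0, 1} := by decide
  have h03 : symmDiff ({0} : Finset (Fin 2)) {0, 1} = {1} := by decide
  have h10 : symmDiff ({1} : Finset (Fin 2)) ∅ = {1} := by decide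
  have h11 : symmDiff ({1} : Finset (Fin 2)) {0} = {0, 1} := by decide
  have h12 : symmDiff ({1} : Finset (Fin 2)) {1} = ∅ := by decide
  have h13 : symmDiff ({1} : Finset (Fin 2)) {0, 1} = {0} := by decide
  simp +decide only [normSq, sum_finset_fin_two, Pi.add_apply, cmul_e_apply,
    h00, h01, h02, h03, h10, h11, h12, h13, csign, neg_one_pow_eq_ite, if_true, if_false]
  ring

/-- For `f = a - i b` this is `|2∂̄f - 2(∂̄φ) f|²`. -/
def dbarNormSq (φ a b : (Fin 2 → ℝ) → ℝ) (x : Fin 2 → ℝ) : ℝ :=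
  (pds 0 a x + pds 1 b x - pds 0 φ x * a x - pds 1 φ x * b x) ^ 2 +
    (pds 0 b x - pds 1 a x - pds 0 φ x * b x + pds 1 φ x * a x) ^ 2

/-- For `f = a - i b` this is `|2∂f|²`. -/
def delNormSq (a b : (Fin 2 → ℝ) → ℝ) (x : Fin 2 → ℝ) : ℝ :=
  (pds 0 a x - pds 1 b x) ^ 2 + (pds 0 b x + pds 1 a x) ^ 2

/-- `2 e^{-φ} (a ∇^⊥b - b ∇^⊥a) - |f|² e^{-φ} ∇φ` with `∇^⊥ = (∂₁, -∂₀)`. Its first part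
absorbs the Jacobian term `|2∂̄f|² - |2∂f|² = 4 (∂₀a ∂₁b - ∂₁a ∂₀b)`, the second
`|∇φ|² |f|² - ∇φ · ∇|f|²`. -/
def dbarFlux (φ a b : (Fin 2 → ℝ) → ℝ) : Fin 2 → (Fin 2 → ℝ) → ℝ :=
  ![fun x => Real.exp (-φ x) *
      (2 * (a x * pds 1 b x - b x * pds 1 a x) - (a x ^ 2 + b x ^ 2) * pds 0 φ x),
    fun x => Real.exp (-φ x) *
      (2 * (b x * pds 0 a x - a x * pds 0 b x) - (a x ^ 2 + b x ^ 2) * pds 1 φ x)]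

theorem normSq_delta {φ : (Fin 2 → ℝ) → ℝ} {u : (Fin 2 → ℝ) → Cl 2} {x : Fin 2 → ℝ}
    (hu : DifferentiableAt ℝ u x) :
    normSq (delta φ u x) = dbarNormSq φ (fun y => u y {0}) (fun y => u y {1}) x +
      dbarNormSq φ (fun y => u y ∅) (fun y => u y {0, 1}) x := by
  rw [delta_eq_sum, Fin.sum_univ_two, normSq_cmul_e_add_cmul_e]
  simp only [dbarNormSq, Pi.sub_apply, Pi.smul_apply, smul_eq_mul, pd_apply hu]
  ring

section ScalarPair

variable {φ a b : (Fin 2 → ℝ) → ℝ}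

theorem dbarNormSq_mul_exp (hφ : ContDiff ℝ 2 φ) (ha : ContDiff ℝ 2 a) (hb : ContDiff ℝ 2 b)
    (x : Fin 2 → ℝ) :
    dbarNormSq φ a b x * Real.exp (-φ x) =
      lap φ x * (a x ^ 2 + b x ^ 2) * Real.exp (-φ x) + delNormSq a b x * Real.exp (-φ x) +
        ∑ j, pds j (dbarFlux φ a b j) x := by
  have hd : ∀ {f : (Fin 2 → ℝ) → ℝ}, ContDiff ℝ 2 f →
      Differentiable ℝ f ∧ ∀ j, Differentiable ℝ (pds j f) := fun hf =>
    ⟨hf.differentiable two_ne_zero,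
      fun j => (contDiff_pds (k := 1) hf j).differentiable one_ne_zero⟩
  obtain ⟨hφ', hφ1⟩ := hd hφ
  obtain ⟨ha', ha1⟩ := hd ha
  obtain ⟨hb', hb1⟩ := hd hb
  simp only [Fin.sum_univ_two, dbarFlux, Matrix.cons_val_zero, Matrix.cons_val_one, sq]
  simp (disch := fun_prop) only [pds_mul, pds_sub, pds_add, pds_exp_neg, pds_const]
  rw [pds_comm ha 0 1, pds_comm hb 0 1]
  simp only [dbarNormSq, delNormSq, lap, Fin.sum_univ_two]
  ring

theorem contDiff_dbarFlux (hφ : ContDiff ℝ 2 φ) (ha : ContDiff ℝ 2 a) (hb : ContDiff ℝ 2 b)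
    (j : Fin 2) : ContDiff ℝ 1 (dbarFlux φ a b j) := by
  have hφ1 := contDiff_pds (k := 1) hφ
  have ha1 := contDiff_pds (k := 1) ha
  have hb1 := contDiff_pds (k := 1) hb
  fin_cases j <;>
    simp only [dbarFlux, Fin.zero_eta, Fin.mk_one, Matrix.cons_val_zero, Matrix.cons_val_one] <;>
    fun_prop (disch := norm_num)

theorem dbarFlux_eq_zero {x : Fin 2 → ℝ} (ha : x ∉ tsupport a) (hb : x ∉ tsupport b) (j : Fin 2) :
    dbarFlux φ a b j x = 0 := by
  fin_cases j <;>
    simp [dbarFlux, image_eq_zero_of_notMem_tsupport ha, image_eq_zero_of_notMem_tsupport hb,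
      pds_eq_zero_of_notMem_tsupport ha, pds_eq_zero_of_notMem_tsupport hb]

end ScalarPair

theorem integral_lap_mul_normSq_le {Φ : (Fin 2 → ℝ) → ℝ} {u : (Fin 2 → ℝ) → Cl 2}
    (hΦ : ContDiff ℝ 2 Φ) (hu : ContDiff ℝ 2 u) (hcs : HasCompactSupport u) :
    ∫ x, lap Φ x * normSq (u x) * Real.exp (-Φ x) ≤
      ∫ x, normSq (delta Φ u x) * Real.exp (-Φ x) := by
  set c : Finset (Fin 2) → (Fin 2 → ℝ) → ℝ := fun A y => u y A
  have hc : ∀ A, ContDiff ℝ 2 (c A) := contDiff_pi.mp hu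
  have hc_out : ∀ A, ∀ x ∉ tsupport u, x ∉ tsupport (c A) := fun A x hx h =>
    hx (tsupport_comp_subset (g := fun v : Cl 2 => v A) rfl u h)
  have hc1 : ∀ A j, Continuous (pds j (c A)) := fun A j =>
    (contDiff_pds (k := 1) (hc A) j).continuous
  have hΦ2 : ∀ j, Continuous (pds j (pds j Φ)) := fun j =>
    (contDiff_pds (k := 0) (contDiff_pds (k := 1) hΦ j) j).continuous
  have hu_cont := hu.continuous
  refine integral_le_of_eq_add_add_sum_pds
    (S := fun x => (delNormSq (c {0}) (c {1}) x + delNormSq (c ∅) (c {0, 1}) x) * Real.exp (-Φ x))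
    (W := fun j x => dbarFlux Φ (c {0}) (c {1}) j x + dbarFlux Φ (c ∅) (c {0, 1}) j x)
    ?_ ?_ ?_ ?_ ?_ ?_
  · refine (Continuous.integrable_of_hasCompactSupport ?_ <|
      HasCompactSupport.intro hcs fun x hx => ?_)
    · simp only [normSq_fin_two, lap, Fin.sum_univ_two]
      fun_prop
    · simp [image_eq_zero_of_notMem_tsupport hx, normSq_zero]
  · refine (Continuous.integrable_of_hasCompactSupport ?_ <|
      HasCompactSupport.intro hcs fun x hx => ?_)
    · simp only [delNormSq]
      fun_prop
    · simp [delNormSq, pds_eq_zero_of_notMem_tsupport (hc_out _ x hx)]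
  · intro x
    simp only [Pi.zero_apply, delNormSq]
    positivity
  · exact fun j => (contDiff_dbarFlux hΦ (hc _) (hc _) j).add (contDiff_dbarFlux hΦ (hc _) (hc _) j)
  · exact fun j => HasCompactSupport.intro hcs fun x hx => by
      simp [dbarFlux_eq_zero (hc_out _ x hx) (hc_out _ x hx)]
  · intro x
    have hd : ∀ A B j, DifferentiableAt ℝ (dbarFlux Φ (c A) (c B) j) x := fun A B j =>
      (contDiff_dbarFlux hΦ (hc A) (hc B) j).differentiable one_ne_zero x
    rw [normSq_delta (hu.differentiable two_ne_zero x), add_mul,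
      dbarNormSq_mul_exp hΦ (hc _) (hc _), dbarNormSq_mul_exp hΦ (hc _) (hc _), normSq_fin_two]
    simp only [Fin.sum_univ_two]
    rw [pds_add (hd _ _ _) (hd _ _ _), pds_add (hd _ _ _) (hd _ _ _)]
    ring

end Cliff

theorem dirac_apriori_dim2_general (Ω : Set (Fin 2 → ℝ)) (hΩ : Cliff.IsDomain Ω)
    (φ : (Fin 2 → ℝ) → ℝ) (hφ : ContDiffOn ℝ 2 φ Ω)
    (u : (Fin 2 → ℝ) → Cl 2) (hu : Cliff.IsTest Ω u) :
    (∫ x in Ω, Cliff.lap φ x * Cliff.normSq (u x) * Real.exp (-φ x)) ≤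
      Cliff.wnorm Ω φ (Cliff.delta φ u) := by
  obtain ⟨hu_smooth, hu_cpt, hu_sub⟩ := hu
  obtain ⟨Φ, hΦ, hΦφ⟩ :=
    hφ.exists_contDiff_eventuallyEq (k := 2) hΩ.1 (isClosed_tsupport u) hu_sub
  have hnear : ∀ x ∈ tsupport u, φ =ᶠ[𝓝 x] Φ := fun x hx =>
    (hΦφ.filter_mono (nhds_le_nhdsSet hx)).symm
  have hout : ∀ x ∉ Ω, x ∉ tsupport u := fun x hx h => hx (hu_sub h)
  simp_rw [Cliff.wnorm, Cliff.lap_mul_normSq_mul_exp_congr hnear,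
    Cliff.normSq_delta_mul_exp_congr hnear]
  rw [setIntegral_eq_integral_of_forall_compl_eq_zero,
    setIntegral_eq_integral_of_forall_compl_eq_zero]
  · exact Cliff.integral_lap_mul_normSq_le hΦ
      (hu_smooth.of_le (WithTop.coe_le_coe.mpr le_top)) hu_cpt
  · intro x hx
    simp [Cliff.delta_eq_zero_of_notMem_tsupport (hout x hx), Cliff.normSq_zero]
  · intro x hx
    simp [image_eq_zero_of_notMem_tsupport (hout x hx), Cliff.normSq_zero]

/-- in dimension 2, for subharmonic `φ`,
`‖Du − (Dφ)u‖²_φ ≥ ∫_Ω (Δφ) |u|² e^{−φ} dV` for every test function `u`. -/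
theorem dirac_apriori_dim2 (Ω : Set (Fin 2 → ℝ)) (hΩ : Cliff.IsDomain Ω)
    (φ : (Fin 2 → ℝ) → ℝ) (hφ : ContDiffOn ℝ 2 φ Ω)
    (hsub : ∀ x ∈ Ω, 0 ≤ Cliff.lap φ x)
    (u : (Fin 2 → ℝ) → Cl 2) (hu : Cliff.IsTest Ω u) :
    (∫ x in Ω, Cliff.lap φ x * Cliff.normSq (u x) * Real.exp (-φ x)) ≤
      Cliff.wnorm Ω φ (Cliff.delta φ u) :=
  dirac_apriori_dim2_general Ω hΩ φ hφ u hu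
end
end

section
/- Let n ≥ 3, Ω = ℝⁿ ∖ closure(B(0,1)), and φ = n log|x|. For m ∈ ℕ₊ set u_m(x) = |x|^{−1/m} (a scalar-valued function) and f_m(x) = −(1/m)|x|^{−1/m−2} x (a Clifford vector-valued function). Then: (i) Δφ = n(n−2)/|x|² on Ω; (ii) Du_m = f_m on Ω; (iii) ‖u_m‖²_φ = (m/2) σ_{n−1}; (iv) ∫_Ω (|f_m|²/Δφ) e^{−φ} dV = σ_{n−1}/(2 m n (n−2)); consequently ‖u_m‖²_φ / ∫_Ω (|f_m|²/Δφ) e^{−φ} dV = m² n (n−2), which tends to +∞ as m → ∞. -/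
open scoped BigOperators
open MeasureTheory

noncomputable section

/-!
Everything is radial. Writing `r = |x|`, one has `Δ(c log r) = c (n - 2) / r²` and, for scalar
powers, `D(r^a) = a r^(a-2) x`. With `a = -1/m` both integrands are therefore constant multiples
of `r^(-2/m-n)` on `Ω`: `|u_m|² e^{-φ} = r^(-2/m-n)` and
`|f_m|² / Δφ · e^{-φ} = r^(-2/m-n) / (m² n (n - 2))`. Polar coordinates give
`∫_{r>1} r^t dV = σ_{n-1} / (-(t + n))` for `t < -n`, which is `m σ_{n-1} / 2` at `t = -2/m - n`.
-/

namespace Cliff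

variable {n : ℕ}

lemma cmul_cone (f : Cl n) : cmul f cone = f := by
  funext C
  rw [cmul, Finset.sum_eq_single C]
  · simp [cone, csign, symmDiff_self]
  · intro A _ hA
    have h : symmDiff A C ≠ ∅ := fun h => hA (by simpa [symmDiff_eq_bot] using h)
    simp [cone, h]
  · simp

lemma cmul_smul_right (c : ℝ) (f g : Cl n) : cmul f (c • g) = c • cmul f g := by
  funext C
  simp only [cmul, Pi.smul_apply, smul_eq_mul, Finset.mul_sum]
  exact Finset.sum_congr rfl fun A _ => by ring

lemma normSq_scal (c : ℝ) : normSq (scal c : Cl n) = c ^ 2 := by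
  simp [normSq, scal, cone, mul_ite, Finset.sum_ite_eq']

lemma normSq_smul (c : ℝ) (f : Cl n) : normSq (c • f) = c ^ 2 * normSq f := by
  simp [normSq, mul_pow, Finset.mul_sum]

def sumSq (x : Fin n → ℝ) : ℝ := ∑ j, x j ^ 2

lemma nrm_eq_sqrt (x : Fin n → ℝ) : nrm x = √(sumSq x) := rfl

lemma sumSq_nonneg (x : Fin n → ℝ) : 0 ≤ sumSq x :=
  Finset.sum_nonneg fun _ _ => sq_nonneg _

lemma nrm_sq (x : Fin n → ℝ) : nrm x ^ 2 = sumSq x :=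
  Real.sq_sqrt (sumSq_nonneg x)

lemma nrm_rpow (x : Fin n → ℝ) (a : ℝ) : nrm x ^ a = sumSq x ^ (a / 2) := by
  rw [nrm_eq_sqrt, Real.sqrt_eq_rpow, ← Real.rpow_mul (sumSq_nonneg x)]
  ring_nf

lemma sumSq_pos {x : Fin n → ℝ} (hx : x ≠ 0) : 0 < sumSq x := by
  obtain ⟨j, hj⟩ := Function.ne_iff.mp hx
  exact Finset.sum_pos' (fun _ _ => sq_nonneg _) ⟨j, Finset.mem_univ j, sq_pos_of_ne_zero hj⟩

lemma continuous_sumSq : Continuous (sumSq : (Fin n → ℝ) → ℝ) :=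
  continuous_finsetSum _ fun j _ => (continuous_apply j).pow 2

lemma continuous_nrm : Continuous (nrm : (Fin n → ℝ) → ℝ) :=
  Real.continuous_sqrt.comp continuous_sumSq

lemma ne_zero_of_one_lt_nrm {x : Fin n → ℝ} (hx : 1 < nrm x) : x ≠ 0 := by
  rintro rfl
  norm_num [nrm] at hx

lemma measurableSet_one_lt_nrm : MeasurableSet {x : Fin n → ℝ | 1 < nrm x} :=
  (isOpen_lt continuous_const continuous_nrm).measurableSet

lemma vec_apply (x : Fin n → ℝ) (A : Finset (Fin n)) :
    vec x A = ∑ j, if A = {j} then x j else 0 := by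
  simp [vec, e]

lemma normSq_vec (x : Fin n → ℝ) : normSq (vec x) = nrm x ^ 2 := by
  have hsingle (j : Fin n) : vec x {j} = x j := by
    rw [vec_apply, Finset.sum_eq_single j] <;> simp +contextual [Finset.singleton_inj, eq_comm]
  have hsub := Finset.subset_univ (Finset.univ.map ⟨_, Finset.singleton_injective (α := Fin n)⟩)
  rw [nrm_sq, normSq, sumSq, ← Finset.sum_subset hsub]
  · simp [hsingle]
  · intro A _ hA
    have h : ∀ j, A ≠ {j} := fun j hj => hA (by simp [hj])
    simp [vec_apply, h]

def sumSqDeriv (x : Fin n → ℝ) : (Fin n → ℝ) →L[ℝ] ℝ :=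
  ∑ j, (2 * x j) • ContinuousLinearMap.proj j

lemma sumSqDeriv_single (x : Fin n → ℝ) (j : Fin n) :
    sumSqDeriv x (Pi.single j 1) = 2 * x j := by
  simp [sumSqDeriv, Pi.single_apply]

lemma hasFDerivAt_sumSq (x : Fin n → ℝ) : HasFDerivAt sumSq (sumSqDeriv x) x := by
  refine HasFDerivAt.fun_sum fun j _ => ?_
  simpa using HasFDerivAt.pow (𝔸 := ℝ) (hasFDerivAt_apply j x) 2

lemma pds_eq_of_hasFDerivAt {φ : (Fin n → ℝ) → ℝ} {L : (Fin n → ℝ) →L[ℝ] ℝ} {x : Fin n → ℝ}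
    (h : HasFDerivAt φ L x) (j : Fin n) : pds j φ x = L (Pi.single j 1) := by
  rw [pds, h.fderiv]

lemma pds_mul_log_nrm (c : ℝ) {x : Fin n → ℝ} (hx : x ≠ 0) (j : Fin n) :
    pds j (fun y => c * Real.log (nrm y)) x = c * x j / sumSq x := by
  have hS := sumSq_pos hx
  have hlog : (fun y => c * Real.log (nrm y)) =ᶠ[nhds x] fun y => c / 2 * Real.log (sumSq y) := by
    filter_upwards [(isOpen_lt continuous_const continuous_sumSq).mem_nhds hS] with y hy
    rw [nrm_eq_sqrt, Real.log_sqrt hy.le]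
    ring
  have hderiv : HasFDerivAt (fun y => c / 2 * Real.log (sumSq y)) _ x :=
    ((Real.hasDerivAt_log hS.ne').comp_hasFDerivAt x (hasFDerivAt_sumSq x)).const_mul _
  rw [pds, hlog.fderiv_eq, ← pds, pds_eq_of_hasFDerivAt hderiv]
  simp only [smul_apply, sumSqDeriv_single, smul_eq_mul]
  field_simp

lemma pds_pds_mul_log_nrm (c : ℝ) {x : Fin n → ℝ} (hx : x ≠ 0) (j : Fin n) :
    pds j (pds j fun y => c * Real.log (nrm y)) x
      = c / sumSq x - 2 * c * x j ^ 2 / sumSq x ^ 2 := by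
  have hS := sumSq_pos hx
  have hpds :
      pds j (fun y => c * Real.log (nrm y)) =ᶠ[nhds x] fun y => c * y j * (sumSq y)⁻¹ := by
    filter_upwards [isOpen_ne.mem_nhds hx] with y hy
    rw [pds_mul_log_nrm c hy, div_eq_mul_inv]
  have hderiv : HasFDerivAt (fun y => c * y j * (sumSq y)⁻¹) _ x :=
    ((hasFDerivAt_apply j x).const_mul c).mul
      ((hasDerivAt_inv hS.ne').comp_hasFDerivAt x (hasFDerivAt_sumSq x))
  rw [pds, hpds.fderiv_eq, ← pds, pds_eq_of_hasFDerivAt hderiv]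
  simp only [add_apply, smul_apply, neg_smul, neg_apply, sumSqDeriv_single, smul_eq_mul,
    ContinuousLinearMap.proj_apply, Pi.single_eq_same, mul_one]
  field_simp
  ring

lemma lap_mul_log_nrm (c : ℝ) {x : Fin n → ℝ} (hx : x ≠ 0) :
    lap (fun y => c * Real.log (nrm y)) x = c * (n - 2) / nrm x ^ 2 := by
  have hS := sumSq_pos hx
  simp only [lap, pds_pds_mul_log_nrm c hx, Finset.sum_sub_distrib, ← Finset.sum_div,
    ← Finset.mul_sum, Finset.sum_const, Finset.card_univ, Fintype.card_fin, nsmul_eq_mul, nrm_sq]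
  rw [← sumSq]
  field_simp

lemma pd_scal_nrm_rpow (a : ℝ) {x : Fin n → ℝ} (hx : x ≠ 0) (j : Fin n) :
    pd j (fun y => scal (nrm y ^ a)) x = scal (a * nrm x ^ (a - 2) * x j) := by
  have hS := sumSq_pos hx
  have hderiv : HasFDerivAt (fun y => sumSq y ^ (a / 2) • (cone : Cl n)) _ x :=
    ((Real.hasDerivAt_rpow_const (Or.inl hS.ne')).comp_hasFDerivAt x
      (hasFDerivAt_sumSq x)).smul_const cone
  simp only [scal, nrm_rpow]
  rw [pd, hderiv.fderiv]
  simp only [ContinuousLinearMap.smulRight_apply, smul_apply, sumSqDeriv_single, smul_eq_mul]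
  rw [show (a - 2) / 2 = a / 2 - 1 by ring]
  ring_nf

lemma dirac_scal_nrm_rpow (a : ℝ) {x : Fin n → ℝ} (hx : x ≠ 0) :
    Dirac (fun y => scal (nrm y ^ a)) x = (a * nrm x ^ (a - 2)) • vec x := by
  simp only [Dirac, pd_scal_nrm_rpow a hx]
  simp only [scal, cmul_smul_right, cmul_cone, vec, Finset.smul_sum, smul_smul]

def sphereArea (n : ℕ) : ℝ :=
  n * (volume (Metric.ball (0 : EuclideanSpace ℝ (Fin n)) 1)).toReal

lemma sphereArea_pos (hn : 0 < n) : 0 < sphereArea n := by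
  have : Nonempty (Fin n) := ⟨⟨0, hn⟩⟩
  have hball : 0 < (volume (Metric.ball (0 : EuclideanSpace ℝ (Fin n)) 1)).toReal :=
    ENNReal.toReal_pos (Metric.measure_ball_pos volume _ one_pos).ne' measure_ball_lt_top.ne
  unfold sphereArea
  positivity

lemma nrm_eq_norm_toLp (x : Fin n → ℝ) : nrm x = ‖WithLp.toLp 2 x‖ := by
  simp [nrm, EuclideanSpace.norm_eq]

lemma integral_comp_nrm (g : ℝ → ℝ) :
    ∫ x : Fin n → ℝ, g (nrm x) = ∫ y : EuclideanSpace ℝ (Fin n), g ‖y‖ := by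
  simp_rw [nrm_eq_norm_toLp]
  exact (PiLp.volume_preserving_toLp (Fin n)).integral_comp
    (MeasurableEquiv.toLp 2 (Fin n → ℝ)).measurableEmbedding (fun y => g ‖y‖)

lemma integral_rpow_nrm_of_one_lt (hn : 0 < n) {t : ℝ} (ht : t + n < 0) :
    ∫ x in {x : Fin n → ℝ | 1 < nrm x}, nrm x ^ t = sphereArea n * (-1 / (t + n)) := by
  have : Nonempty (Fin n) := ⟨⟨0, hn⟩⟩
  set g := (Set.Ioi (1 : ℝ)).indicator fun r => r ^ t
  have radial : ∫ r in Set.Ioi (0 : ℝ), r ^ (n - 1) • g r = -1 / (t + n) := by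
    have hpt : ∀ r ∈ Set.Ioi (0 : ℝ),
        r ^ (n - 1) • g r = (Set.Ioi 1).indicator (fun r => r ^ (t + n - 1)) r := by
      intro r hr
      by_cases h1 : r ∈ Set.Ioi 1
      · simp only [g, Set.indicator_of_mem h1, smul_eq_mul]
        rw [← Real.rpow_natCast, ← Real.rpow_add hr, Nat.cast_sub hn, Nat.cast_one]
        ring_nf
      · simp [g, h1]
    rw [setIntegral_congr_fun measurableSet_Ioi hpt, setIntegral_indicator measurableSet_Ioi,
      Set.inter_eq_self_of_subset_right (Set.Ioi_subset_Ioi zero_le_one),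
      integral_Ioi_rpow_of_lt (by linarith) one_pos, Real.one_rpow]
    ring_nf
  calc ∫ x in {x : Fin n → ℝ | 1 < nrm x}, nrm x ^ t
      = ∫ x, g (nrm x) := by
        rw [← integral_indicator measurableSet_one_lt_nrm]
        rfl
    _ = ∫ y : EuclideanSpace ℝ (Fin n), g ‖y‖ := integral_comp_nrm g
    _ = sphereArea n * (-1 / (t + n)) := by
        rw [integral_fun_norm_addHaar, finrank_euclideanSpace_fin, radial]
        simp [sphereArea, measureReal_def, mul_assoc]

lemma exp_neg_mul_log {r : ℝ} (hr : 0 < r) (c : ℝ) :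
    Real.exp (-(c * Real.log r)) = r ^ (-c) := by
  rw [Real.rpow_def_of_pos hr]
  ring_nf

lemma wnorm_scal_nrm_rpow (hn : 0 < n) {a : ℝ} (ha : a < 0) :
    wnorm {x : Fin n → ℝ | 1 < nrm x} (fun x => n * Real.log (nrm x))
        (fun x => scal (nrm x ^ a)) = sphereArea n * (-1 / (2 * a)) := by
  have hpt : ∀ x ∈ {x : Fin n → ℝ | 1 < nrm x},
      normSq (scal (nrm x ^ a) : Cl n) * Real.exp (-(n * Real.log (nrm x)))
        = nrm x ^ (2 * a - n) := by
    intro x hx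
    have hr : 0 < nrm x := one_pos.trans hx
    rw [normSq_scal, exp_neg_mul_log hr, ← Real.rpow_natCast, ← Real.rpow_mul hr.le,
      ← Real.rpow_add hr]
    ring_nf
  rw [wnorm, setIntegral_congr_fun measurableSet_one_lt_nrm hpt,
    integral_rpow_nrm_of_one_lt hn (by linarith)]
  ring_nf

lemma integral_normSq_div_lap (hn : 3 ≤ n) {a : ℝ} (ha : a < 0) :
    ∫ x in {x : Fin n → ℝ | 1 < nrm x},
        normSq ((a * nrm x ^ (a - 2)) • vec x) / lap (fun x => n * Real.log (nrm x)) x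
          * Real.exp (-(n * Real.log (nrm x)))
      = -a * sphereArea n / (2 * n * (n - 2)) := by
  have hn' : (3 : ℝ) ≤ n := by exact_mod_cast hn
  have hpt : ∀ x ∈ {x : Fin n → ℝ | 1 < nrm x},
      normSq ((a * nrm x ^ (a - 2)) • vec x) / lap (fun x => n * Real.log (nrm x)) x
          * Real.exp (-(n * Real.log (nrm x)))
        = a ^ 2 / (n * (n - 2)) * nrm x ^ (2 * a - n) := by
    intro x hx
    have hr : 0 < nrm x := one_pos.trans hx
    have hpow : nrm x ^ (2 * a - n)
        = (nrm x ^ (a - 2)) ^ 2 * nrm x ^ 2 * nrm x ^ 2 * nrm x ^ (-(n : ℝ)) := by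
      rw [show 2 * a - n = (a - 2) + (a - 2) + 2 + 2 + -(n : ℝ) by ring, Real.rpow_add hr,
        Real.rpow_add hr, Real.rpow_add hr, Real.rpow_add hr, Real.rpow_two]
      ring
    rw [normSq_smul, normSq_vec, lap_mul_log_nrm _ (ne_zero_of_one_lt_nrm hx),
      exp_neg_mul_log hr, hpow]
    field_simp
  rw [setIntegral_congr_fun measurableSet_one_lt_nrm hpt, integral_const_mul,
    integral_rpow_nrm_of_one_lt (by omega) (by linarith)]
  have hn2 : (n : ℝ) - 2 ≠ 0 := by linarith
  have ha0 : a ≠ 0 := ha.ne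
  field_simp
  ring

end Cliff

open Cliff

/-- the obstruction in higher dimensions. On
`Ω = ℝⁿ ∖ closure B(0,1)` with `φ = n log|x|`, for `u_m = |x|^{−1/m}` and
`f_m = −(1/m)|x|^{−1/m−2} x` one has: (i) `Δφ = n(n−2)/|x|²` on `Ω`;
(ii) `Du_m = f_m` on `Ω`; (iii) `‖u_m‖²_φ = (m/2) σ_{n−1}`;
(iv) `∫_Ω (|f_m|²/Δφ) e^{−φ} = σ_{n−1}/(2 m n (n−2))`; consequently the ratio
equals `m² n (n−2)` and tends to `+∞`. Here `σ_{n−1} = n · vol(Bⁿ)` is the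
surface area of the unit sphere. -/
theorem dirac_obstruction_higher_dim (n : ℕ) (hn : 3 ≤ n)
    (Ω : Set (Fin n → ℝ)) (hΩ : Ω = {x | 1 < Cliff.nrm x})
    (φ : (Fin n → ℝ) → ℝ) (hφ : φ = fun x => n * Real.log (Cliff.nrm x))
    (σ : ℝ) (hσ : σ = (n : ℝ) *
      (volume (Metric.ball (0 : EuclideanSpace ℝ (Fin n)) 1)).toReal)
    (u f : ℕ → (Fin n → ℝ) → Cl n)
    (hu : ∀ m x, u m x = Cliff.scal (Cliff.nrm x ^ (-(1 / (m : ℝ)))))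
    (hf : ∀ m x, f m x =
      (-(1 / (m : ℝ)) * Cliff.nrm x ^ (-(1 / (m : ℝ)) - 2)) • Cliff.vec x) :
    (∀ x ∈ Ω, Cliff.lap φ x = (n : ℝ) * ((n : ℝ) - 2) / Cliff.nrm x ^ 2) ∧
    (∀ m : ℕ, 0 < m → ∀ x ∈ Ω, Cliff.Dirac (u m) x = f m x) ∧
    (∀ m : ℕ, 0 < m → Cliff.wnorm Ω φ (u m) = (m : ℝ) / 2 * σ) ∧
    (∀ m : ℕ, 0 < m →
      (∫ x in Ω, Cliff.normSq (f m x) / Cliff.lap φ x * Real.exp (-φ x)) =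
        σ / (2 * (m : ℝ) * (n : ℝ) * ((n : ℝ) - 2))) ∧
    (∀ m : ℕ, 0 < m →
      Cliff.wnorm Ω φ (u m) /
        (∫ x in Ω, Cliff.normSq (f m x) / Cliff.lap φ x * Real.exp (-φ x)) =
        (m : ℝ) ^ 2 * (n : ℝ) * ((n : ℝ) - 2)) ∧
    Filter.Tendsto (fun m : ℕ =>
      Cliff.wnorm Ω φ (u m) /
        (∫ x in Ω, Cliff.normSq (f m x) / Cliff.lap φ x * Real.exp (-φ x)))
      Filter.atTop Filter.atTop := by
  replace hσ : σ = sphereArea n := hσ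
  have hn' : (3 : ℝ) ≤ n := by exact_mod_cast hn
  have hσ_pos : 0 < σ := hσ ▸ sphereArea_pos (by omega)
  have hu_eq (m : ℕ) : u m = fun x => scal (nrm x ^ (-(1 / (m : ℝ)))) := funext (hu m)
  have h_exp_neg {m : ℕ} (hm : 0 < m) : -(1 / (m : ℝ)) < 0 :=
    neg_lt_zero.mpr (one_div_pos.mpr (Nat.cast_pos.mpr hm))
  have norm_u (m : ℕ) (hm : 0 < m) : wnorm Ω φ (u m) = m / 2 * σ := by
    rw [hΩ, hφ, hu_eq, wnorm_scal_nrm_rpow (by omega) (h_exp_neg hm), hσ]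
    field_simp
  have integral_f (m : ℕ) (hm : 0 < m) :
      ∫ x in Ω, normSq (f m x) / lap φ x * Real.exp (-φ x) = σ / (2 * m * n * (n - 2)) := by
    simp only [hΩ, hφ, hf]
    rw [integral_normSq_div_lap hn (h_exp_neg hm), hσ]
    field_simp
  have ratio (m : ℕ) (hm : 0 < m) : wnorm Ω φ (u m) /
      (∫ x in Ω, normSq (f m x) / lap φ x * Real.exp (-φ x)) = m ^ 2 * n * (n - 2) := by
    rw [norm_u m hm, integral_f m hm]
    field_simp
  have hx_ne {x} (hx : x ∈ Ω) : x ≠ 0 := ne_zero_of_one_lt_nrm (by rwa [hΩ] at hx)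
  refine ⟨fun x hx => ?_, fun m _ x hx => ?_, norm_u, integral_f, ratio, ?_⟩
  · rw [hφ, lap_mul_log_nrm _ (hx_ne hx)]
  · rw [hu_eq, hf, dirac_scal_nrm_rpow _ (hx_ne hx)]
  · have hsq := (Filter.tendsto_pow_atTop two_ne_zero).comp (tendsto_natCast_atTop_atTop (R := ℝ))
    refine (hsq.atTop_mul_const (by nlinarith : (0 : ℝ) < n * (n - 2))).congr' ?_
    filter_upwards [Filter.eventually_gt_atTop 0] with m hm
    rw [Function.comp_apply, ratio m hm, mul_assoc]
end
end
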